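/- arXiv:0910.2083 — 3 statements merged into one kernel-verified Lean document; each statement's English description precedes it below -/
import Mathlib

section
/- The formal power series solution f of the ODE x^3 f'(x) = (1+3x^2) f(x) - x^6 is unique: there is exactly one formal power series f ∈ ℂ[[x]] satisfying x^3 f' = (1+3x^2) f - x^6. -/
/-!
Comparing coefficients, `X ^ 3 * f' = (1 + 3 * X ^ 2) * f - X ^ 6` says exactly that
`f₀ = f₁ = 0` and `f (n + 2) = (n - 3) * f n + [n = 4]`. This recursion determines every
coefficient, so there is exactly one solution (namely `∑ₖ (2k + 1)‼ X ^ (2k + 6)`).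
-/

open PowerSeries

section

variable {R : Type*} [CommRing R]

def SolvesODE (f : R⟦X⟧) : Prop :=
  X ^ 3 * derivative R f = (1 + 3 * X ^ 2) * f - X ^ 6

theorem solvesODE_iff_eq (f : R⟦X⟧) :
    SolvesODE f ↔ f = X ^ 6 + X ^ 2 * (X * derivative R f - 3 * f) := by
  unfold SolvesODE
  constructor <;> intro h <;> linear_combination -h

theorem coeff_X_mul_derivative (f : R⟦X⟧) (n : ℕ) :
    coeff n (X * derivative R f) = n * coeff n f := by
  rcases n with _ | n
  · simp
  · rw [coeff_succ_X_mul, coeff_derivative, Nat.cast_succ, mul_comm]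

theorem coeff_X_sq_mul_derivative_sub (f : R⟦X⟧) (n : ℕ) :
    coeff (n + 2) (X ^ 2 * (X * derivative R f - 3 * f)) = ((n : R) - 3) * coeff n f := by
  rw [coeff_X_pow_mul, map_sub, coeff_X_mul_derivative, ← map_ofNat (C (R := R)) 3, coeff_C_mul,
    sub_mul]

theorem coeff_X_sq_mul_of_lt (f : R⟦X⟧) {n : ℕ} (hn : n < 2) :
    coeff n (X ^ 2 * f) = 0 := by
  rw [coeff_X_pow_mul', if_neg (by omega)]

theorem solvesODE_iff_coeff (f : R⟦X⟧) :
    SolvesODE f ↔ coeff 0 f = 0 ∧ coeff 1 f = 0 ∧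
      ∀ n : ℕ, coeff (n + 2) f = ((n : R) - 3) * coeff n f + if n = 4 then 1 else 0 := by
  rw [solvesODE_iff_eq, PowerSeries.ext_iff]
  have coeff_X_pow_six (n : ℕ) : coeff (n + 2) (X ^ 6 : R⟦X⟧) = if n = 4 then 1 else 0 := by
    simp [coeff_X_pow]
  constructor
  · intro h
    refine ⟨?_, ?_, fun n => ?_⟩
    · simpa [coeff_X_sq_mul_of_lt] using h 0
    · simpa [coeff_X_sq_mul_of_lt] using h 1
    · rw [h (n + 2), map_add, coeff_X_pow_six, coeff_X_sq_mul_derivative_sub, add_comm]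
  · rintro ⟨h0, h1, hrec⟩ (_ | _ | n)
    · simpa [coeff_X_sq_mul_of_lt] using h0
    · simpa [coeff_X_sq_mul_of_lt] using h1
    · rw [hrec n, map_add, coeff_X_pow_six, coeff_X_sq_mul_derivative_sub, add_comm]

variable (R) in
def odeCoeff : ℕ → R
  | 0 => 0
  | 1 => 0
  | n + 2 => ((n : R) - 3) * odeCoeff n + if n = 4 then 1 else 0

theorem solvesODE_mk_odeCoeff : SolvesODE (mk (odeCoeff R)) :=
  (solvesODE_iff_coeff _).2 ⟨coeff_mk _ _, coeff_mk _ _, fun n => by simp only [coeff_mk, odeCoeff]⟩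

theorem SolvesODE.eq_mk_odeCoeff {f : R⟦X⟧} (hf : SolvesODE f) : f = mk (odeCoeff R) := by
  obtain ⟨h0, h1, hrec⟩ := (solvesODE_iff_coeff f).1 hf
  ext n
  rw [coeff_mk]
  induction n using Nat.twoStepInduction with
  | zero => exact h0
  | one => exact h1
  | more n ih _ => rw [hrec, ih, odeCoeff]

theorem existsUnique_solvesODE : ∃! f : R⟦X⟧, SolvesODE f :=
  ⟨mk (odeCoeff R), solvesODE_mk_odeCoeff, fun _ hf => hf.eq_mk_odeCoeff⟩

end

/-- The formal power series solution of `x^3 f' = (1+3x^2) f - x^6` is unique. -/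
theorem stmt_0 :
    ∃! f : PowerSeries ℂ,
      (X : ℂ⟦X⟧) ^ 3 * PowerSeries.derivative ℂ f
        = (1 + 3 * X ^ 2) * f - X ^ 6 :=
  existsUnique_solvesODE
end

section
/- The unique formal power series solution of x^3 f'(x) = (1+3x^2) f(x) - x^6 is divergent, i.e., it has radius of convergence 0. -/
/-!
Comparing coefficients of `x^n` in `x^3 f' = (1 + 3x^2) f - x^6` gives
`a (n + 2) = (n - 3) a n + [n = 4]` and `a 0 = 0`, so `a 2 = a 4 = 0`, `a 6 = 1` and
`a (2k + 6) = (2k + 1)‼ ≥ k!`. Hence `a (2k + 6) r^(2k + 6) → ∞` for every `r > 0`,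
while summability would force it to tend to `0`.
-/

open PowerSeries Filter Nat Topology

section Recurrence

variable {R : Type*} [CommRing R]

lemma coeff_zero_eq_zero_of_ode {f : R⟦X⟧}
    (hf : (X : R⟦X⟧) ^ 3 * derivative R f = (1 + 3 * X ^ 2) * f - X ^ 6) :
    coeff 0 f = 0 := by
  simpa [add_mul, mul_assoc, coeff_X_pow_mul', coeff_X_pow] using (congrArg (coeff 0) hf).symm

lemma coeff_add_two_of_ode {f : R⟦X⟧}
    (hf : (X : R⟦X⟧) ^ 3 * derivative R f = (1 + 3 * X ^ 2) * f - X ^ 6) (n : ℕ) :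
    coeff (n + 2) f = ((n : R) - 3) * coeff n f + if n = 4 then 1 else 0 := by
  have hrhs : (1 + 3 * X ^ 2) * f = f + C (3 : R) * (X ^ 2 * f) := by
    rw [map_ofNat]; ring
  have h := congrArg (coeff (n + 2)) hf
  rw [hrhs] at h
  simp only [map_sub, map_add, coeff_C_mul, coeff_X_pow_mul', coeff_X_pow, coeff_derivative] at h
  rcases n with _ | m
  · simp only [zero_add, reduceLeDiff, ↓reduceIte, tsub_self, reduceEqDiff, cast_zero] at h ⊢
    linear_combination -h
  · simp only [le_add_iff_nonneg_left, _root_.zero_le, ↓reduceIte, reduceSubDiff,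
      add_tsub_cancel_right, reduceEqDiff, cast_add, cast_one] at h ⊢
    linear_combination -h

lemma coeff_two_mul_add_six_of_ode {f : R⟦X⟧}
    (hf : (X : R⟦X⟧) ^ 3 * derivative R f = (1 + 3 * X ^ 2) * f - X ^ 6) (k : ℕ) :
    coeff (2 * k + 6) f = ((2 * k + 1)‼ : R) := by
  induction k with
  | zero =>
    have h2 : coeff 2 f = 0 := by
      simpa [coeff_zero_eq_zero_of_ode hf] using coeff_add_two_of_ode hf 0
    have h4 : coeff 4 f = 0 := by simpa [h2] using coeff_add_two_of_ode hf 2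
    simpa [h4] using coeff_add_two_of_ode hf 4
  | succ k ih =>
    rw [show 2 * (k + 1) + 6 = 2 * k + 6 + 2 by ring, coeff_add_two_of_ode hf, ih,
      if_neg (by omega), add_zero, show 2 * (k + 1) + 1 = 2 * k + 1 + 2 by ring,
      doubleFactorial_add_two]
    push_cast
    ring

end Recurrence

lemma factorial_le_doubleFactorial_two_mul_add_one (k : ℕ) : k ! ≤ (2 * k + 1)‼ := by
  induction k with
  | zero => rfl
  | succ k ih =>
    rw [factorial_succ, show 2 * (k + 1) + 1 = 2 * k + 1 + 2 by ring, doubleFactorial_add_two]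
    exact Nat.mul_le_mul (by omega) ih

lemma tendsto_factorial_mul_pow_atTop {c : ℝ} (hc : 0 < c) :
    Tendsto (fun n : ℕ => (n ! : ℝ) * c ^ n) atTop atTop := by
  have h : Tendsto (fun n : ℕ => c⁻¹ ^ n / n !) atTop (𝓝[>] 0) :=
    tendsto_nhdsWithin_iff.2 ⟨FloorSemiring.tendsto_pow_div_factorial_atTop c⁻¹,
      Eventually.of_forall fun n => show 0 < c⁻¹ ^ n / (n ! : ℝ) by positivity⟩
  convert h.inv_tendsto_nhdsGT_zero using 1
  ext n
  simp [inv_pow]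

/-- The unique formal power series solution of `x^3 f' = (1+3x^2) f - x^6` is
divergent: it has radius of convergence `0`, i.e. for every positive real `r`
the series `∑ ‖a_n‖ r^n` diverges. -/
theorem stmt_1 (f : PowerSeries ℂ)
    (hf : (X : ℂ⟦X⟧) ^ 3 * PowerSeries.derivative ℂ f
        = (1 + 3 * X ^ 2) * f - X ^ 6) :
    ∀ r : ℝ, 0 < r → ¬ Summable (fun n : ℕ => ‖PowerSeries.coeff n f‖ * r ^ n) := by
  intro r hr hsum
  have hsub : Tendsto (fun k : ℕ => ‖coeff (2 * k + 6) f‖ * r ^ (2 * k + 6)) atTop (𝓝 0) :=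
    hsum.tendsto_atTop_zero.comp
      (tendsto_atTop_mono (fun k => show k ≤ 2 * k + 6 by omega) tendsto_id)
  have hgrow : Tendsto (fun k : ℕ => ‖coeff (2 * k + 6) f‖ * r ^ (2 * k + 6)) atTop atTop := by
    refine tendsto_atTop_mono (fun k => ?_)
      ((tendsto_factorial_mul_pow_atTop (pow_pos hr 2)).atTop_mul_const (pow_pos hr 6))
    rw [coeff_two_mul_add_six_of_ode hf, Complex.norm_natCast, pow_add, pow_mul, ← mul_assoc]
    gcongr
    exact_mod_cast factorial_le_doubleFactorial_two_mul_add_one k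
  exact not_tendsto_nhds_of_tendsto_atTop hgrow 0 hsub
end

section
/- The function x ↦ x·(1 - 2x² log w)^{-1/2}, for fixed w with |w - 1| < 1/5 and x in the closed unit disc, satisfies |x(1-2x² log w)^{-1/2} - x| ≤ A|x|³ for some absolute constant A > 0 (e.g., A = 1 works), where the principal branches of log and square root are used. -/
/-!
Write `s = z ^ (1/2)` for the principal square root. Then `z ^ (-1/2) - 1 = (1 - z) / (s (1 + s))`,
so it suffices that `‖s‖ ‖1 + s‖ ≥ 1`. Since `Re s ≥ 0` and `z = s²` gives `Re z ≤ (Re s)²`,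
both factors are bounded below by `Re s` and `1 + Re s`, and `a (1 + a) ≥ 1` once `a² ≥ 2/5`.
With `u = 2 x² log w` we have `‖log w‖ ≤ 3/10`, hence `‖u‖ ≤ 3/5 ‖x‖²` and `Re (1 - u) ≥ 2/5`.
-/

namespace Complex

lemma re_cpow_inv_two_nonneg (z : ℂ) : 0 ≤ (z ^ (2⁻¹ : ℂ)).re := by
  rw [cpow_inv_two_re]
  exact Real.sqrt_nonneg _

lemma re_le_sq_re_cpow_inv_two (z : ℂ) : z.re ≤ (z ^ (2⁻¹ : ℂ)).re ^ 2 := by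
  have := abs_re_le_norm z
  rw [cpow_inv_two_re, Real.sq_sqrt (by linarith [neg_abs_le z.re])]
  linarith [le_abs_self z.re]

lemma cpow_neg_inv_two_sub_one {z : ℂ} (hz : z ≠ 0) :
    z ^ (-2⁻¹ : ℂ) - 1 = (1 - z) / (z ^ (2⁻¹ : ℂ) * (1 + z ^ (2⁻¹ : ℂ))) := by
  have hsq : (z ^ (2⁻¹ : ℂ)) ^ 2 = z := cpow_ofNat_inv_pow z 2
  have hs0 : z ^ (2⁻¹ : ℂ) ≠ 0 := fun h => hz (by rw [← hsq, h, zero_pow two_ne_zero])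
  have hs : 1 + z ^ (2⁻¹ : ℂ) ≠ 0 := fun h => by
    have := congrArg re h
    rw [add_re, one_re, zero_re] at this
    linarith [re_cpow_inv_two_nonneg z]
  rw [cpow_neg]
  generalize z ^ (2⁻¹ : ℂ) = s at hsq hs0 hs ⊢
  field_simp
  linear_combination -hsq

lemma norm_cpow_neg_inv_two_sub_one_le {z : ℂ} (hz : 2 / 5 ≤ z.re) :
    ‖z ^ (-2⁻¹ : ℂ) - 1‖ ≤ ‖1 - z‖ := by
  set s := z ^ (2⁻¹ : ℂ)
  have hs_re : 0 ≤ s.re := re_cpow_inv_two_nonneg z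
  have hz_re : z.re ≤ s.re ^ 2 := re_le_sq_re_cpow_inv_two z
  have hprod : 1 ≤ ‖s‖ * ‖1 + s‖ :=
    calc 1 ≤ s.re * (1 + s.re) := by nlinarith
      _ ≤ ‖s‖ * ‖1 + s‖ := by
        gcongr
        · exact re_le_norm s
        · simpa using re_le_norm (1 + s)
  have hz0 : z ≠ 0 := fun h => by norm_num [h] at hz
  rw [cpow_neg_inv_two_sub_one hz0, norm_div, norm_mul]
  exact div_le_self (norm_nonneg _) hprod

lemma norm_log_le_of_norm_sub_one_lt {w : ℂ} (hw : ‖w - 1‖ < 1 / 5) : ‖log w‖ ≤ 3 / 10 := by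
  have h := norm_log_one_add_half_le_self (z := w - 1) (by linarith)
  rw [add_sub_cancel] at h
  linarith

end Complex

/-- There is a constant `A > 0` (e.g. `A = 1`) such that for every `w` with
`|w - 1| < 1/5` and every `x` in the closed unit disc,
`|x·(1 - 2x² log w)^{-1/2} - x| ≤ A|x|³`, using principal branches of `log`
and of the power. -/
theorem stmt_18 :
    ∃ A : ℝ, 0 < A ∧ A = 1 ∧
      ∀ w : ℂ, ‖w - 1‖ < 1 / 5 →
        ∀ x : ℂ, ‖x‖ ≤ 1 →
          ‖x * (1 - 2 * x ^ 2 * Complex.log w) ^ (-(1 / 2) : ℂ) - x‖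
            ≤ A * ‖x‖ ^ 3 := by
  refine ⟨1, one_pos, rfl, fun w hw x hx => ?_⟩
  set u := 2 * x ^ 2 * Complex.log w
  have hu : ‖u‖ ≤ 3 / 5 * ‖x‖ ^ 2 := by
    have := Complex.norm_log_le_of_norm_sub_one_lt hw
    simp only [u, norm_mul, norm_pow, Complex.norm_two]
    nlinarith [sq_nonneg ‖x‖]
  have hre : 2 / 5 ≤ (1 - u).re := by
    have : ‖x‖ ^ 2 ≤ 1 := pow_le_one₀ (norm_nonneg x) hx
    rw [Complex.sub_re, Complex.one_re]
    linarith [Complex.re_le_norm u]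
  calc ‖x * (1 - u) ^ (-(1 / 2) : ℂ) - x‖ = ‖x‖ * ‖(1 - u) ^ (-2⁻¹ : ℂ) - 1‖ := by
        rw [← mul_sub_one, norm_mul, one_div]
    _ ≤ ‖x‖ * ‖u‖ := by
        gcongr
        simpa using Complex.norm_cpow_neg_inv_two_sub_one_le hre
    _ ≤ ‖x‖ * (3 / 5 * ‖x‖ ^ 2) := by gcongr
    _ ≤ 1 * ‖x‖ ^ 3 := by nlinarith [pow_nonneg (norm_nonneg x) 3]
end
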